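/- A monotone (circular-order-preserving) bijection of a dense subset of the circle to itself extends uniquely to a homeomorphism of the circle. -/

import Mathlib

open Set Function

private lemma equiv_int {f : ℝ → ℝ} (hf : ∀ x, f (x + 1) = f x + 1) :
    ∀ (t : ℝ) (n : ℤ), f (t + n) = f t + n := by
  have key : ∀ n : ℤ, ∀ t : ℝ, f (t + n) = f t + n := by
    intro n
    induction n using Int.induction_on with
    | zero => simp
    | succ k ih =>
      intro t
      have h1 : (t + ((k : ℤ) + 1 : ℤ) : ℝ) = (t + (k : ℤ)) + 1 := by push_cast; ring
      rw [h1, hf, ih]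
      push_cast; ring
    | pred k ih =>
      intro t
      have h1 : f ((t + (-(k : ℤ) - 1 : ℤ)) + 1) = f (t + (-(k : ℤ) - 1 : ℤ)) + 1 := hf _
      have h2 : ((t + (-(k : ℤ) - 1 : ℤ)) + 1 : ℝ) = t + (-(k : ℤ) : ℤ) := by push_cast; ring
      rw [h2, ih] at h1
      have h3 : f (t + (-(k : ℤ) - 1 : ℤ)) = f t + (-(k : ℤ) : ℤ) - 1 := by linarith
      rw [h3]; push_cast; ring
  exact fun t n => key n t

private lemma map_toIocMod (h1 : (0:ℝ) < 1) {f : ℝ → ℝ} (hmono : StrictMono f)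
    (hf : ∀ (t : ℝ) (n : ℤ), f (t + n) = f t + n) (x z : ℝ) :
    toIocMod h1 (f x) (f z) = f (toIocMod h1 x z) := by
  rw [toIocMod_eq_iff]
  have h := toIocMod_mem_Ioc h1 x z
  have hx1 : f (x + 1) = f x + 1 := by simpa using hf x 1
  refine ⟨⟨hmono h.1, by have := hmono.monotone h.2; linarith⟩, toIocDiv h1 x z, ?_⟩
  conv_lhs => rw [← toIocMod_add_toIocDiv_zsmul h1 x z]
  rw [zsmul_eq_mul, mul_one, hf]

private lemma map_toIcoMod (h1 : (0:ℝ) < 1) {f : ℝ → ℝ} (hmono : StrictMono f)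
    (hf : ∀ (t : ℝ) (n : ℤ), f (t + n) = f t + n) (x z : ℝ) :
    toIcoMod h1 (f x) (f z) = f (toIcoMod h1 x z) := by
  rw [toIcoMod_eq_iff]
  have h := toIcoMod_mem_Ico h1 x z
  have hx1 : f (x + 1) = f x + 1 := by simpa using hf x 1
  refine ⟨⟨hmono.monotone h.1, by have := hmono h.2; linarith⟩, toIcoDiv h1 x z, ?_⟩
  conv_lhs => rw [← toIcoMod_add_toIcoDiv_zsmul h1 x z]
  rw [zsmul_eq_mul, mul_one, hf]

private lemma coe_eq_coe_of_sub_int {y Y : ℝ} (n : ℤ) (h : y - Y = n) :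
    (y : AddCircle (1:ℝ)) = (Y : AddCircle (1:ℝ)) := by
  rw [QuotientAddGroup.eq_iff_sub_mem]
  refine ⟨n, show n • (1:ℝ) = y - Y from ?_⟩
  rw [zsmul_eq_mul, mul_one, h]

private lemma sbtw_coe_iff (h1 : (0:ℝ) < 1) (x y z : ℝ) :
    sbtw (x : AddCircle (1:ℝ)) (y : AddCircle (1:ℝ)) (z : AddCircle (1:ℝ)) ↔
      toIocMod h1 x y < toIocMod h1 x z ∧ toIocMod h1 x z < x + 1 := by
  set Y := toIocMod h1 x y with hYdef
  set Z := toIocMod h1 x z with hZdef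
  have hY := toIocMod_mem_Ioc h1 x y
  have hZ := toIocMod_mem_Ioc h1 x z
  have hyY : (y : AddCircle (1:ℝ)) = (Y : AddCircle (1:ℝ)) := by
    refine coe_eq_coe_of_sub_int (toIocDiv h1 x y) ?_
    have := toIocMod_add_toIocDiv_zsmul h1 x y
    rw [zsmul_eq_mul, mul_one] at this
    linarith
  have hzZ : (z : AddCircle (1:ℝ)) = (Z : AddCircle (1:ℝ)) := by
    refine coe_eq_coe_of_sub_int (toIocDiv h1 x z) ?_
    have := toIocMod_add_toIocDiv_zsmul h1 x z
    rw [zsmul_eq_mul, mul_one] at this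
    linarith
  rw [hyY, hzZ, sbtw_iff_not_btw, QuotientAddGroup.btw_coe_iff, not_le]
  rcases eq_or_lt_of_le hZ.2 with htop | hlt
  · have h2 : toIocMod h1 Z x = x + 2 := by
      rw [toIocMod_eq_iff]
      exact ⟨⟨by linarith, by linarith⟩, ⟨-2, by push_cast [zsmul_eq_mul]; ring⟩⟩
    have h3 := (toIcoMod_mem_Ico h1 Z Y).2
    rw [h2]
    exact iff_of_false (by linarith) (fun h => absurd h.2 (by rw [← htop]; exact lt_irrefl _))
  · have h2 : toIocMod h1 Z x = x + 1 := by
      rw [toIocMod_eq_iff]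
      exact ⟨⟨hlt, by linarith [hZ.1]⟩, ⟨-1, by push_cast [zsmul_eq_mul]; ring⟩⟩
    rw [h2]
    rcases lt_or_ge Y Z with hYZ | hZY
    · have h3 : toIcoMod h1 Z Y = Y + 1 := by
        rw [toIcoMod_eq_iff]
        exact ⟨⟨by linarith [hY.1], by linarith⟩, ⟨-1, by push_cast [zsmul_eq_mul]; ring⟩⟩
      rw [h3]
      exact iff_of_true (by linarith [hY.1]) ⟨hYZ, hlt⟩
    · have h3 : toIcoMod h1 Z Y = Y := (toIcoMod_eq_self h1).2 ⟨hZY, by linarith [hY.2, hZ.1]⟩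
      rw [h3]
      exact iff_of_false (by linarith [hY.2]) (fun h => absurd h.1 (not_lt.2 hZY))

private noncomputable def descend (f : ℝ → ℝ)
    (hf : ∀ (t : ℝ) (n : ℤ), f (t + n) = f t + n) :
    AddCircle (1:ℝ) → AddCircle (1:ℝ) :=
  Quotient.map' f (by
    intro a b h
    rw [QuotientAddGroup.leftRel_apply] at h ⊢
    obtain ⟨n, hn⟩ := h
    have hn' : n • (1:ℝ) = -a + b := hn
    rw [zsmul_eq_mul, mul_one] at hn'
    refine ⟨n, show n • (1:ℝ) = -f a + f b from ?_⟩
    have hb : b = a + n := by linarith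
    rw [hb, hf, zsmul_eq_mul, mul_one]; ring)

private lemma descend_coe (f : ℝ → ℝ) (hf : ∀ (t : ℝ) (n : ℤ), f (t + n) = f t + n)
    (x : ℝ) : descend f hf (x : AddCircle (1:ℝ)) = ((f x : ℝ) : AddCircle (1:ℝ)) := rfl

private lemma descend_continuous (f : ℝ → ℝ) (hf : ∀ (t : ℝ) (n : ℤ), f (t + n) = f t + n)
    (hc : Continuous f) : Continuous (descend f hf) := by
  rw [(QuotientAddGroup.isQuotientMap_mk (AddSubgroup.zmultiples (1:ℝ))).continuous_iff]
  have : (descend f hf) ∘ (QuotientAddGroup.mk : ℝ → AddCircle (1:ℝ)) =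
      (QuotientAddGroup.mk : ℝ → AddCircle (1:ℝ)) ∘ f := funext fun x => descend_coe f hf x
  rw [this]
  exact QuotientAddGroup.continuous_mk.comp hc

private noncomputable def coord (h1 : (0:ℝ) < 1) (a0 : ℝ) (u : AddCircle (1:ℝ)) : ℝ :=
  ((QuotientAddGroup.equivIocMod h1 a0 u : Set.Ioc a0 (a0+1)) : ℝ)

private lemma coord_coe (h1 : (0:ℝ) < 1) (a0 x : ℝ) :
    coord h1 a0 (x : AddCircle (1:ℝ)) = toIocMod h1 a0 x := by
  unfold coord
  rw [QuotientAddGroup.equivIocMod_coe]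

private lemma coord_mem (h1 : (0:ℝ) < 1) (a0 : ℝ) (u : AddCircle (1:ℝ)) :
    coord h1 a0 u ∈ Set.Ioc a0 (a0 + 1) :=
  (QuotientAddGroup.equivIocMod h1 a0 u).2

private lemma coord_lift (h1 : (0:ℝ) < 1) (a0 : ℝ) (u : AddCircle (1:ℝ)) :
    ((coord h1 a0 u : ℝ) : AddCircle (1:ℝ)) = u :=
  (QuotientAddGroup.equivIocMod h1 a0).symm_apply_apply u

private lemma coord_top (h1 : (0:ℝ) < 1) (a0 : ℝ) :
    coord h1 a0 ((a0 : ℝ) : AddCircle (1:ℝ)) = a0 + 1 := by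
  rw [coord_coe, toIocMod_apply_left]

private lemma coord_eq_top_iff (h1 : (0:ℝ) < 1) (a0 : ℝ) (w : AddCircle (1:ℝ)) :
    w = ((a0 : ℝ) : AddCircle (1:ℝ)) ↔ coord h1 a0 w = a0 + 1 := by
  constructor
  · intro h; rw [h, coord_top]
  · intro h
    rw [← coord_lift h1 a0 w, h]
    exact coe_eq_coe_of_sub_int 1 (by push_cast; ring)

private lemma coord_lt_iff (h1 : (0:ℝ) < 1) (a0 : ℝ) (u v : AddCircle (1:ℝ)) :
    coord h1 a0 u < coord h1 a0 v ↔
      (sbtw ((a0 : ℝ) : AddCircle (1:ℝ)) u v ∨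
        (v = ((a0:ℝ) : AddCircle (1:ℝ)) ∧ u ≠ ((a0:ℝ) : AddCircle (1:ℝ)))) := by
  have hs : sbtw ((a0:ℝ) : AddCircle (1:ℝ)) u v ↔
      coord h1 a0 u < coord h1 a0 v ∧ coord h1 a0 v < a0 + 1 := by
    conv_lhs => rw [← coord_lift h1 a0 u, ← coord_lift h1 a0 v]
    rw [sbtw_coe_iff h1]
    rw [(toIocMod_eq_self h1).2 (coord_mem h1 a0 u), (toIocMod_eq_self h1).2 (coord_mem h1 a0 v)]
  by_cases hv : coord h1 a0 v = a0 + 1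
  · constructor
    · intro h
      exact Or.inr ⟨(coord_eq_top_iff h1 a0 v).2 hv,
        fun hu => by rw [(coord_eq_top_iff h1 a0 u).1 hu, hv] at h; exact lt_irrefl _ h⟩
    · rintro (h | ⟨-, hu⟩)
      · exact (hs.1 h).1
      · rw [hv]
        exact lt_of_le_of_ne (coord_mem h1 a0 u).2
          (fun he => hu ((coord_eq_top_iff h1 a0 u).2 he))
  · constructor
    · intro h
      exact Or.inl (hs.2 ⟨h, lt_of_le_of_ne (coord_mem h1 a0 v).2 hv⟩)
    · rintro (h | ⟨hveq, -⟩)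
      · exact (hs.1 h).1
      · exact absurd ((coord_eq_top_iff h1 a0 v).1 hveq) hv
private lemma exists_good_f (D : Set (AddCircle (1 : ℝ))) (hD : Dense D) (φ : D ≃ D)
    (hφ : ∀ a b c : D, sbtw (a : AddCircle (1 : ℝ)) b c ↔
      sbtw (φ a : AddCircle (1 : ℝ)) (φ b) (φ c)) :
    ∃ f : ℝ → ℝ, StrictMono f ∧ Surjective f ∧ (∀ x, f (x + 1) = f x + 1) ∧
      (∀ (x : ℝ) (hx : (x : AddCircle (1:ℝ)) ∈ D),
        ((f x : ℝ) : AddCircle (1:ℝ)) = ((φ ⟨(x : AddCircle (1:ℝ)), hx⟩ : D) : AddCircle (1:ℝ))) := by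
  classical
  have h1 : (0:ℝ) < 1 := one_pos
  obtain ⟨d0v, hd0v⟩ := hD.nonempty
  set d0 : D := ⟨d0v, hd0v⟩ with hd0def
  obtain ⟨a0, ha0⟩ : ∃ a : ℝ, (a : AddCircle (1:ℝ)) = d0v := QuotientAddGroup.mk_surjective d0v
  obtain ⟨b0, hb0⟩ : ∃ b : ℝ, (b : AddCircle (1:ℝ)) = ((φ d0 : D) : AddCircle (1:ℝ)) :=
    QuotientAddGroup.mk_surjective _
  -- monotonicity transfer through φ
  have hmono : ∀ d e : D, coord h1 a0 ↑d < coord h1 a0 ↑e →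
      coord h1 b0 ↑(φ d) < coord h1 b0 ↑(φ e) := by
    intro d e h
    rw [coord_lt_iff] at h
    rw [coord_lt_iff]
    rcases h with h | ⟨he, hdne⟩
    · left
      rw [ha0] at h
      have h' : sbtw ((d0 : D) : AddCircle (1:ℝ)) (d : AddCircle (1:ℝ)) (e : AddCircle (1:ℝ)) := h
      have := (hφ d0 d e).1 h'
      rw [← hb0] at this
      exact this
    · right
      rw [ha0] at he hdne
      have he' : e = d0 := Subtype.ext he
      constructor
      · rw [he', hb0]
      · intro hc
        apply hdne
        have h2 : φ d = φ d0 := Subtype.ext (by rw [hc, hb0])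
        have h3 : d = d0 := φ.injective h2
        rw [h3]
  -- the dense set of good lifts
  set A : Set ℝ := (fun x : ℝ => (x : AddCircle (1:ℝ))) ⁻¹' D with hAdef
  have hA : Dense A := hD.preimage QuotientAddGroup.isOpenMap_coe
  have hcoeZ : ∀ (x : ℝ) (n : ℤ), ((x + n : ℝ) : AddCircle (1:ℝ)) = (x : AddCircle (1:ℝ)) :=
    fun x n => coe_eq_coe_of_sub_int n (by ring)
  have hAZ : ∀ x ∈ A, ∀ n : ℤ, (x + (n:ℝ)) ∈ A := by
    intro x hx n
    show ((x + (n:ℝ) : ℝ) : AddCircle (1:ℝ)) ∈ D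
    rw [hcoeZ]
    exact hx
  -- the partial lift g
  set g : ℝ → ℝ := fun x =>
    if hx : (x : AddCircle (1:ℝ)) ∈ D then
      coord h1 b0 ((φ ⟨(x : AddCircle (1:ℝ)), hx⟩ : D) : AddCircle (1:ℝ))
        + (x - coord h1 a0 (x : AddCircle (1:ℝ)))
    else 0 with hgdef
  have hgval : ∀ (x : ℝ) (hx : (x : AddCircle (1:ℝ)) ∈ D),
      g x = coord h1 b0 ((φ ⟨(x : AddCircle (1:ℝ)), hx⟩ : D) : AddCircle (1:ℝ))
        + (x - coord h1 a0 (x : AddCircle (1:ℝ))) := by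
    intro x hx
    rw [hgdef]
    exact dif_pos hx
  have hint : ∀ (c x : ℝ), ∃ n : ℤ, x - coord h1 c (x : AddCircle (1:ℝ)) = n := by
    intro c x
    refine ⟨toIocDiv h1 c x, ?_⟩
    rw [coord_coe]
    have := toIocMod_add_toIocDiv_zsmul h1 c x
    rw [zsmul_eq_mul, mul_one] at this
    linarith
  have hgmono : ∀ x ∈ A, ∀ y ∈ A, x < y → g x < g y := by
    intro x hx y hy hxy
    have hx' : (x : AddCircle (1:ℝ)) ∈ D := hx
    have hy' : (y : AddCircle (1:ℝ)) ∈ D := hy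
    obtain ⟨m, hm⟩ := hint a0 x
    obtain ⟨n, hn⟩ := hint a0 y
    rw [hgval x hx', hgval y hy', hm, hn]
    have hmemx := coord_mem h1 a0 (x : AddCircle (1:ℝ))
    have hmemy := coord_mem h1 a0 (y : AddCircle (1:ℝ))
    have hRx := coord_mem h1 b0 ((φ ⟨(x : AddCircle (1:ℝ)), hx'⟩ : D) : AddCircle (1:ℝ))
    have hRy := coord_mem h1 b0 ((φ ⟨(y : AddCircle (1:ℝ)), hy'⟩ : D) : AddCircle (1:ℝ))
    rcases lt_trichotomy m n with hmn | hmn | hmn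
    · have hc : (m:ℝ) + 1 ≤ n := by exact_mod_cast Int.add_one_le_iff.2 hmn
      have h2 := hRx.2
      have h3 := hRy.1
      linarith
    · subst hmn
      have hQxy : coord h1 a0 (x : AddCircle (1:ℝ)) < coord h1 a0 (y : AddCircle (1:ℝ)) := by
        linarith
      have := hmono ⟨(x : AddCircle (1:ℝ)), hx'⟩ ⟨(y : AddCircle (1:ℝ)), hy'⟩ hQxy
      linarith
    · exfalso
      have hc : (n:ℝ) + 1 ≤ m := by exact_mod_cast Int.add_one_le_iff.2 hmn
      have h2 := hmemx.1
      have h3 := hmemy.2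
      linarith
  have hgmono' : ∀ x ∈ A, ∀ y ∈ A, x ≤ y → g x ≤ g y := by
    intro x hx y hy hxy
    rcases eq_or_lt_of_le hxy with rfl | h
    · exact le_refl _
    · exact (hgmono x hx y hy h).le
  have hgper : ∀ x ∈ A, ∀ n : ℤ, g (x + (n:ℝ)) = g x + n := by
    intro x hx n
    have hx' : (x : AddCircle (1:ℝ)) ∈ D := hx
    have hxn : ((x + (n:ℝ) : ℝ) : AddCircle (1:ℝ)) ∈ D := by rw [hcoeZ]; exact hx'
    rw [hgval x hx', hgval (x + (n:ℝ)) hxn]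
    have hsub : (⟨((x + (n:ℝ) : ℝ) : AddCircle (1:ℝ)), hxn⟩ : D)
        = ⟨(x : AddCircle (1:ℝ)), hx'⟩ := Subtype.ext (hcoeZ x n)
    rw [hsub, hcoeZ x n]
    ring
  -- the extension f
  have hne : ∀ x : ℝ, (A ∩ Set.Iic x).Nonempty := by
    intro x
    obtain ⟨s, hsA, hs⟩ := hA.exists_mem_open isOpen_Ioo
      (Set.nonempty_Ioo.2 (by linarith : x - 1 < x))
    exact ⟨s, hsA, le_of_lt hs.2⟩
  have hpick : ∀ x y : ℝ, x < y → ∃ t ∈ A, x < t ∧ t < y := by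
    intro x y hxy
    obtain ⟨t, htA, ht⟩ := hA.exists_mem_open isOpen_Ioo (Set.nonempty_Ioo.2 hxy)
    exact ⟨t, htA, ht.1, ht.2⟩
  have hbdd : ∀ x : ℝ, BddAbove (g '' (A ∩ Set.Iic x)) := by
    intro x
    obtain ⟨t, htA, hxt, -⟩ := hpick x (x+1) (by linarith)
    refine ⟨g t, ?_⟩
    rintro r ⟨s, ⟨hsA, hsx⟩, rfl⟩
    exact (hgmono s hsA t htA (lt_of_le_of_lt hsx hxt)).le
  set f : ℝ → ℝ := fun x => sSup (g '' (A ∩ Set.Iic x)) with hfdef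
  have hfg : ∀ x ∈ A, f x = g x := by
    intro x hx
    apply le_antisymm
    · apply csSup_le ((hne x).image g)
      rintro r ⟨s, ⟨hsA, hsx⟩, rfl⟩
      exact hgmono' s hsA x hx hsx
    · exact le_csSup (hbdd x) ⟨x, ⟨hx, le_refl x⟩, rfl⟩
  have hfmono : Monotone f := by
    intro x y hxy
    exact csSup_le_csSup (hbdd y) ((hne x).image g)
      (Set.image_mono (Set.inter_subset_inter_right A (Set.Iic_subset_Iic.2 hxy)))
  have hfstrict : StrictMono f := by
    intro x y hxy
    obtain ⟨s, hsA, hs⟩ := hpick x y hxy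
    obtain ⟨t, htA, ht⟩ := hpick s y hs.2
    calc f x ≤ g s := csSup_le ((hne x).image g) (by
          rintro r ⟨u, ⟨huA, hux⟩, rfl⟩
          exact hgmono' u huA s hsA (le_of_lt (lt_of_le_of_lt hux hs.1)))
      _ < g t := hgmono s hsA t htA ht.1
      _ = f t := (hfg t htA).symm
      _ ≤ f y := hfmono (le_of_lt ht.2)
  have hfper : ∀ x : ℝ, f (x + 1) = f x + 1 := by
    intro x
    have hlub : IsLUB (g '' (A ∩ Set.Iic x)) (f x) := isLUB_csSup ((hne x).image g) (hbdd x)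
    have hset : g '' (A ∩ Set.Iic (x + 1)) = (fun r => r + 1) '' (g '' (A ∩ Set.Iic x)) := by
      ext r
      constructor
      · rintro ⟨s, ⟨hsA, hsx⟩, rfl⟩
        have hm1 : s + ((-1 : ℤ) : ℝ) ∈ A := hAZ s hsA (-1)
        have he : s + ((-1 : ℤ) : ℝ) = s - 1 := by push_cast; ring
        rw [he] at hm1
        refine ⟨g (s - 1), ⟨s - 1, ⟨hm1, by simpa using hsx⟩, rfl⟩, ?_⟩
        have := hgper (s - 1) hm1 1
        have he2 : s - 1 + ((1:ℤ):ℝ) = s := by push_cast; ring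
        rw [he2] at this
        rw [this]
        push_cast
        ring
      · rintro ⟨r', ⟨s, ⟨hsA, hsx⟩, rfl⟩, rfl⟩
        have h1A : s + ((1 : ℤ) : ℝ) ∈ A := hAZ s hsA 1
        have he : s + ((1 : ℤ) : ℝ) = s + 1 := by push_cast; ring
        rw [he] at h1A
        refine ⟨s + 1, ⟨h1A, Set.mem_Iic.2 (by linarith [Set.mem_Iic.1 hsx])⟩, ?_⟩
        have := hgper s hsA 1
        have he2 : s + ((1:ℤ):ℝ) = s + 1 := by push_cast; ring
        rw [he2] at this
        rw [this]
        push_cast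
        ring
    have hlub2 : IsLUB (g '' (A ∩ Set.Iic (x + 1))) (f x + 1) := by
      rw [hset]
      constructor
      · rintro r ⟨r', hr', rfl⟩
        have := hlub.1 hr'
        simpa using this
      · intro u hu
        have : f x ≤ u - 1 := by
          apply hlub.2
          intro r' hr'
          have := hu ⟨r', hr', rfl⟩
          simp only at this
          linarith
        linarith
    exact hlub2.csSup_eq ((hne (x+1)).image g)
  have hfz : ∀ (t : ℝ) (n : ℤ), f (t + n) = f t + n := equiv_int hfper
  have hrange : A ⊆ Set.range f := by
    intro y hy
    have hy' : (y : AddCircle (1:ℝ)) ∈ D := hy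
    obtain ⟨n, hn⟩ := hint b0 y
    set d' : D := φ.symm ⟨(y : AddCircle (1:ℝ)), hy'⟩ with hd'
    set x : ℝ := coord h1 a0 ((d' : D) : AddCircle (1:ℝ)) + (n:ℝ) with hxdef
    have hxcoe : ((x : ℝ) : AddCircle (1:ℝ)) = ((d' : D) : AddCircle (1:ℝ)) := by
      rw [hxdef, hcoeZ, coord_lift]
    have hxA : (x : ℝ) ∈ A := by
      show ((x : ℝ) : AddCircle (1:ℝ)) ∈ D
      rw [hxcoe]
      exact d'.2
    have hxA' : ((x : ℝ) : AddCircle (1:ℝ)) ∈ D := hxA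
    refine ⟨x, ?_⟩
    rw [hfg x hxA, hgval x hxA']
    have hsub : (⟨((x : ℝ) : AddCircle (1:ℝ)), hxA'⟩ : D) = d' := Subtype.ext hxcoe
    rw [hsub, hxcoe, hd', φ.apply_symm_apply]
    have hcb : coord h1 b0 ((⟨(y : AddCircle (1:ℝ)), hy'⟩ : D) : AddCircle (1:ℝ))
        = coord h1 b0 (y : AddCircle (1:ℝ)) := rfl
    rw [hcb, hxdef]
    linarith
  have hdense : DenseRange f := hA.mono hrange
  have hfcont : Continuous f := hfmono.continuous_of_denseRange hdense
  have hfsurj : Surjective f := by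
    apply hfcont.surjective
    · apply Filter.tendsto_atTop_atTop_of_monotone hfmono
      intro b
      refine ⟨(0:ℝ) + ((⌈b - f 0⌉ : ℤ) : ℝ), ?_⟩
      rw [hfz]
      have := Int.le_ceil (b - f 0)
      linarith
    · apply Filter.tendsto_atBot_atBot_of_monotone hfmono
      intro b
      refine ⟨(0:ℝ) + ((⌊b - f 0⌋ : ℤ) : ℝ), ?_⟩
      rw [hfz]
      have := Int.floor_le (b - f 0)
      linarith
  refine ⟨f, hfstrict, hfsurj, hfper, ?_⟩
  intro x hx
  have hxA : x ∈ A := hx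
  rw [hfg x hxA, hgval x hx]
  obtain ⟨n, hn⟩ := hint a0 x
  rw [hn, hcoeZ, coord_lift]
/-- A bijection of a dense subset of the circle preserving the cyclic order extends
uniquely to an (orientation-, i.e. cyclic-order-preserving) homeomorphism of the circle. -/
theorem stmt_14 (D : Set (AddCircle (1 : ℝ))) (hD : Dense D) (φ : D ≃ D)
    (hφ : ∀ a b c : D, sbtw (a : AddCircle (1 : ℝ)) b c ↔
      sbtw (φ a : AddCircle (1 : ℝ)) (φ b) (φ c)) :
    ∃! F : AddCircle (1 : ℝ) ≃ₜ AddCircle (1 : ℝ),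
      (∀ a b c : AddCircle (1 : ℝ), sbtw a b c → sbtw (F a) (F b) (F c)) ∧
      (∀ x : D, F x = φ x) := by
  have h1 : (0:ℝ) < 1 := one_pos
  obtain ⟨f, hstrict, hsurj, hper, hcomp⟩ := exists_good_f D hD φ hφ
  have hfz : ∀ (t : ℝ) (n : ℤ), f (t + n) = f t + n := equiv_int hper
  set e : ℝ ≃o ℝ := StrictMono.orderIsoOfSurjective f hstrict hsurj with hedef
  have hecoe : ∀ x, e x = f x := fun x => rfl
  have hsymz : ∀ (t : ℝ) (n : ℤ), e.symm (t + n) = e.symm t + n := by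
    intro t n
    apply e.injective
    have h2 : e (e.symm t + (n:ℝ)) = t + n := by
      have h3 : e (e.symm t + (n:ℝ)) = f (e.symm t + (n:ℝ)) := hecoe _
      rw [h3, hfz]
      have h4 : f (e.symm t) = e (e.symm t) := (hecoe _).symm
      rw [h4, e.apply_symm_apply]
    rw [e.apply_symm_apply, h2]
  set Ff := descend f hfz with hFf
  set Gf := descend (⇑e.symm) hsymz with hGf
  have hFfc : ∀ x : ℝ, Ff (x : AddCircle (1:ℝ)) = ((f x : ℝ) : AddCircle (1:ℝ)) :=
    fun x => descend_coe f hfz x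
  have hGfc : ∀ x : ℝ, Gf (x : AddCircle (1:ℝ)) = ((e.symm x : ℝ) : AddCircle (1:ℝ)) :=
    fun x => descend_coe _ hsymz x
  have hleft : Function.LeftInverse Gf Ff := by
    intro u
    obtain ⟨x, rfl⟩ := QuotientAddGroup.mk_surjective u
    rw [hFfc, hGfc]
    have : e.symm (f x) = x := by rw [← hecoe, e.symm_apply_apply]
    rw [this]
  have hright : Function.RightInverse Gf Ff := by
    intro u
    obtain ⟨x, rfl⟩ := QuotientAddGroup.mk_surjective u
    rw [hGfc, hFfc]
    have : f (e.symm x) = x := by rw [← hecoe, e.apply_symm_apply]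
    rw [this]
  set F : AddCircle (1 : ℝ) ≃ₜ AddCircle (1 : ℝ) :=
    { toFun := Ff
      invFun := Gf
      left_inv := hleft
      right_inv := hright
      continuous_toFun := descend_continuous f hfz
        (hstrict.monotone.continuous_of_surjective hsurj)
      continuous_invFun := descend_continuous (⇑e.symm) hsymz
        (e.symm.monotone.continuous_of_surjective e.symm.surjective) } with hFdef
  have hFapp : ∀ x : ℝ, F ((x : ℝ) : AddCircle (1:ℝ)) = ((f x : ℝ) : AddCircle (1:ℝ)) :=
    fun x => hFfc x
  have prop1 : ∀ a b c : AddCircle (1 : ℝ), sbtw a b c → sbtw (F a) (F b) (F c) := by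
    intro a b c h
    obtain ⟨x, rfl⟩ := QuotientAddGroup.mk_surjective a
    obtain ⟨y, rfl⟩ := QuotientAddGroup.mk_surjective b
    obtain ⟨z, rfl⟩ := QuotientAddGroup.mk_surjective c
    rw [hFapp, hFapp, hFapp]
    rw [sbtw_coe_iff h1] at h ⊢
    obtain ⟨hlt, htop⟩ := h
    rw [map_toIocMod h1 hstrict hfz, map_toIocMod h1 hstrict hfz]
    exact ⟨hstrict hlt, lt_of_lt_of_le (hstrict htop) (le_of_eq (hper x))⟩
  have prop2 : ∀ x : D, F (x : AddCircle (1:ℝ)) = ((φ x : D) : AddCircle (1:ℝ)) := by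
    intro x
    obtain ⟨r, hr⟩ := QuotientAddGroup.mk_surjective ((x : D) : AddCircle (1:ℝ))
    have hrD : ((r : ℝ) : AddCircle (1:ℝ)) ∈ D := by rw [hr]; exact x.2
    rw [← hr, hFapp, hcomp r hrD]
    exact congrArg (fun d : D => (d : AddCircle (1:ℝ))) (congrArg φ (Subtype.ext hr))
  refine ⟨F, ⟨prop1, prop2⟩, ?_⟩
  rintro G ⟨-, hG⟩
  have hfun : ⇑G = ⇑F := by
    apply Continuous.ext_on hD G.continuous F.continuous
    intro u hu
    exact (hG ⟨u, hu⟩).trans (prop2 ⟨u, hu⟩).symm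
  exact Homeomorph.ext fun u => congrFun hfun u
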